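/- Let H be an m×n real matrix with HᵀH invertible, z, a ∈ ℝ^m with a = H c for some c ∈ ℝ^n, and let x̂ = (HᵀH)⁻¹ Hᵀ z. If ‖z − H x̂‖ ≤ τ for a threshold τ ≥ 0, then the polluted measurement z + a also passes the residual test: ‖(z + a) − H x̂_bad‖ ≤ τ, where x̂_bad = (HᵀH)⁻¹ Hᵀ (z + a). -/
import Mathlib


open Matrix

theorem fdia_bypass_residual_test (m n : ℕ) (H : Matrix (Fin m) (Fin n) ℝ)
    [Invertible (Hᵀ * H)] (z a : Fin m → ℝ) (c : Fin n → ℝ)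
    (ha : a = H.mulVec c) (τ : ℝ) (hτ : 0 ≤ τ)
    (hres : ‖(EuclideanSpace.equiv (Fin m) ℝ).symm
        (z - H.mulVec (((Hᵀ * H)⁻¹ * Hᵀ).mulVec z))‖ ≤ τ) :
    ‖(EuclideanSpace.equiv (Fin m) ℝ).symm
        ((z + a) - H.mulVec (((Hᵀ * H)⁻¹ * Hᵀ).mulVec (z + a)))‖ ≤ τ := by
  have key : H.mulVec (((Hᵀ * H)⁻¹ * Hᵀ).mulVec a) = a := by
    subst ha
    rw [Matrix.mulVec_mulVec, Matrix.mulVec_mulVec, Matrix.mul_assoc,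
      Matrix.mul_assoc (Hᵀ * H)⁻¹ Hᵀ H, Matrix.inv_mul_of_invertible, Matrix.mul_one]
  have : (z + a) - H.mulVec (((Hᵀ * H)⁻¹ * Hᵀ).mulVec (z + a))
      = z - H.mulVec (((Hᵀ * H)⁻¹ * Hᵀ).mulVec z) := by
    rw [Matrix.mulVec_add, Matrix.mulVec_add, key]
    abel
  rw [this]
  exact hres
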